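/- arXiv:2205.00016 — 6 statements merged into one kernel-verified Lean document; each statement's English description precedes it below -/
import Mathlib

section
/- Let ρ be a density matrix on the bipartite system ℂ^{dA} ⊗ ℂ^{dB}, and define γ(ρ) := inf { a₊ + a₋ : a₊, a₋ ≥ 0 and ρ = a₊·ρ₊ − a₋·ρ₋ for some separable density matrices ρ₊, ρ₋ }. Then γ(ρ) = 1 + 2·E(ρ), where E is the robustness of entanglement. -/
open Matrix Complex Kronecker
open scoped ComplexOrder

noncomputable section

/-- A density matrix: positive semidefinite with trace 1. -/
def IsDensityMatrix {d : Type*} [Fintype d] (ρ : Matrix d d ℂ) : Prop :=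
  ρ.PosSemidef ∧ ρ.trace = 1

/-- A separable state on a bipartite system: a finite convex combination of Kronecker
products of density matrices. -/
def SeparableState {dA dB : Type*} [Fintype dA] [Fintype dB]
    (ρ : Matrix (dA × dB) (dA × dB) ℂ) : Prop :=
  ∃ (n : ℕ) (p : Fin n → ℝ) (σ : Fin n → Matrix dA dA ℂ) (τ : Fin n → Matrix dB dB ℂ),
    (∀ k, 0 ≤ p k) ∧ (∑ k, p k) = 1 ∧
    (∀ k, IsDensityMatrix (σ k)) ∧ (∀ k, IsDensityMatrix (τ k)) ∧
    ρ = ∑ k, (p k : ℂ) • ((σ k) ⊗ₖ (τ k))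

/-- The robustness of entanglement. -/
def robustness {dA dB : Type*} [Fintype dA] [Fintype dB]
    (ρ : Matrix (dA × dB) (dA × dB) ℂ) : ℝ :=
  sInf { t : ℝ | 0 ≤ t ∧ ∃ σ : Matrix (dA × dB) (dA × dB) ℂ,
    SeparableState σ ∧ SeparableState (((1 + t : ℝ) : ℂ)⁻¹ • (ρ + (t : ℂ) • σ)) }

/-- γ(ρ): optimal one-norm of a quasiprobability decomposition into separable states. -/
def gammaSep {dA dB : Type*} [Fintype dA] [Fintype dB]
    (ρ : Matrix (dA × dB) (dA × dB) ℂ) : ℝ :=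
  sInf { c : ℝ | ∃ (ap am : ℝ) (ρp ρm : Matrix (dA × dB) (dA × dB) ℂ),
    0 ≤ ap ∧ 0 ≤ am ∧ SeparableState ρp ∧ SeparableState ρm ∧
    ρ = (ap : ℂ) • ρp - (am : ℂ) • ρm ∧ c = ap + am }

/-- Singular values of a complex matrix: square roots of eigenvalues of `Mᴴ * M`. -/
def singularValues {m n : Type*} [Fintype m] [Fintype n] [DecidableEq n]
    (M : Matrix m n ℂ) : n → ℝ :=
  fun i => Real.sqrt ((Matrix.isHermitian_conjTranspose_mul_self M).eigenvalues i)

/-! Separable states have trace one, so a decomposition `ρ = a₊ ρ₊ - a₋ ρ₋` of a state forces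
`a₊ = 1 + a₋`, and it is then the same datum as the mixture `ρ + a₋ ρ₋ = (1 + a₋) ρ₊` in the
definition of the robustness: the values admissible for `γ` are exactly the `1 + 2 t` with `t`
admissible for `E`. What remains is that these sets are nonempty (otherwise both infima are the
junk value `0`): density matrices span all matrices (by polarization), hence Kronecker products of
density matrices span all bipartite matrices, so a Hermitian `ρ` is a real combination of product
states, and such a combination can be mixed into a separable state. -/

theorem Submodule.vecMulVec_star_mem {d : Type*} {p : Submodule ℂ (Matrix d d ℂ)}
    (hp : ∀ w : d → ℂ, vecMulVec w (star w) ∈ p) (u v : d → ℂ) :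
    vecMulVec u (star v) ∈ p := by
  have hpolar : vecMulVec u (star v) = (1 / 2 : ℂ) •
      ((vecMulVec (u + v) (star (u + v)) - vecMulVec u (star u) - vecMulVec v (star v)) +
        I • (vecMulVec (u + I • v) (star (u + I • v)) - vecMulVec u (star u) -
          vecMulVec v (star v))) := by
    ext i j
    simp only [vecMulVec_apply, Pi.star_apply, Pi.add_apply, Pi.smul_apply, smul_eq_mul,
      star_add, star_mul', Complex.star_def, Complex.conj_I, Matrix.smul_apply, Matrix.add_apply,
      Matrix.sub_apply]
    linear_combination
      (starRingEnd ℂ (v j) * (v i * I + u i) - v i * starRingEnd ℂ (u j)) / 2 * Complex.I_sq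
  rw [hpolar]
  refine p.smul_mem _ (p.add_mem ?_ (p.smul_mem _ ?_)) <;>
    exact p.sub_mem (p.sub_mem (hp _) (hp u)) (hp v)

theorem sum_smul_eq_sum_re_smul_of_isHermitian {ι n : Type*} (s : Finset ι) (c : ι → ℂ)
    (H : ι → Matrix n n ℂ) (hH : ∀ i, (H i).IsHermitian)
    (hsum : (∑ i ∈ s, c i • H i).IsHermitian) :
    ∑ i ∈ s, c i • H i = ∑ i ∈ s, ((c i).re : ℂ) • H i := by
  have hconj : ∑ i ∈ s, c i • H i = ∑ i ∈ s, starRingEnd ℂ (c i) • H i := by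
    conv_lhs => rw [← hsum, conjTranspose_sum]
    simp only [conjTranspose_smul, (hH _).eq]
    rfl
  calc ∑ i ∈ s, c i • H i
      = (1 / 2 : ℂ) • (∑ i ∈ s, c i • H i + ∑ i ∈ s, starRingEnd ℂ (c i) • H i) := by
        rw [← hconj, ← two_smul ℂ, smul_smul]; norm_num
    _ = ∑ i ∈ s, ((c i).re : ℂ) • H i := by
        simp only [← Finset.sum_add_distrib, ← add_smul, Finset.smul_sum, smul_smul,
          Complex.re_eq_add_conj]
        ring_nf

section SingleSystem

variable {d : Type*} [Fintype d]

theorem Matrix.PosSemidef.mem_span_isDensityMatrix {P : Matrix d d ℂ} (hP : P.PosSemidef) :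
    P ∈ Submodule.span ℂ {M : Matrix d d ℂ | IsDensityMatrix M} := by
  obtain ⟨t, ht0, htr⟩ : ∃ t : ℝ, 0 ≤ t ∧ P.trace = t :=
    ⟨P.trace.re, (Complex.nonneg_iff.mp hP.trace_nonneg).1,
      Complex.ext rfl (Complex.nonneg_iff.mp hP.trace_nonneg).2.symm⟩
  rcases ht0.eq_or_lt with rfl | htpos
  · rw [hP.trace_eq_zero_iff.mp (by simpa using htr)]
    exact Submodule.zero_mem _
  have hdensity : IsDensityMatrix (((t⁻¹ : ℝ) : ℂ) • P) :=
    ⟨hP.smul (Complex.zero_le_real.mpr (inv_nonneg.mpr ht0)), by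
      rw [trace_smul, htr, smul_eq_mul, ← Complex.ofReal_mul, inv_mul_cancel₀ htpos.ne',
        Complex.ofReal_one]⟩
  have hP_eq : P = (t : ℂ) • ((t⁻¹ : ℝ) : ℂ) • P := by
    rw [smul_smul, ← Complex.ofReal_mul, mul_inv_cancel₀ htpos.ne', Complex.ofReal_one, one_smul]
  rw [hP_eq]
  exact Submodule.smul_mem _ _ (Submodule.subset_span hdensity)

theorem span_isDensityMatrix_eq_top [DecidableEq d] :
    Submodule.span ℂ {M : Matrix d d ℂ | IsDensityMatrix M} = ⊤ := by
  refine eq_top_iff.2 ((stdBasis ℂ d d).span_eq.symm.le.trans (Submodule.span_le.2 ?_))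
  rintro _ ⟨⟨i, j⟩, rfl⟩
  rw [stdBasis_eq_single, single_eq_single_vecMulVec_single,
    show (Pi.single j 1 : d → ℂ) = star (Pi.single j 1) by simp]
  exact Submodule.vecMulVec_star_mem
    (fun (w : d → ℂ) => (posSemidef_vecMulVec_self_star w).mem_span_isDensityMatrix) _ _

end SingleSystem

section Bipartite

variable {dA dB : Type*} [Fintype dA] [Fintype dB]

theorem span_kronecker_isDensityMatrix_eq_top [DecidableEq dA] [DecidableEq dB] :
    Submodule.span ℂ (Set.image2 (· ⊗ₖ ·) {σ : Matrix dA dA ℂ | IsDensityMatrix σ}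
      {τ : Matrix dB dB ℂ | IsDensityMatrix τ}) = ⊤ := by
  have hmap := Submodule.map₂_span_span ℂ
    (LinearMap.mk₂ ℂ (· ⊗ₖ ·) add_kronecker smul_kronecker kronecker_add kronecker_smul)
    {σ : Matrix dA dA ℂ | IsDensityMatrix σ} {τ : Matrix dB dB ℂ | IsDensityMatrix τ}
  simp only [LinearMap.mk₂_apply] at hmap
  rw [← hmap, span_isDensityMatrix_eq_top, span_isDensityMatrix_eq_top]
  refine eq_top_iff.2 ((stdBasis ℂ _ _).span_eq.symm.le.trans (Submodule.span_le.2 ?_))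
  rintro _ ⟨⟨⟨i, k⟩, ⟨j, l⟩⟩, rfl⟩
  rw [stdBasis_eq_single, ← one_mul (1 : ℂ), ← single_kronecker_single]
  exact Submodule.apply_mem_map₂ _ Submodule.mem_top Submodule.mem_top

theorem Matrix.IsHermitian.exists_eq_sum_real_smul_kronecker
    {ρ : Matrix (dA × dB) (dA × dB) ℂ} (hρ : ρ.IsHermitian) :
    ∃ (n : ℕ) (r : Fin n → ℝ) (σ : Fin n → Matrix dA dA ℂ) (τ : Fin n → Matrix dB dB ℂ),
      (∀ k, IsDensityMatrix (σ k)) ∧ (∀ k, IsDensityMatrix (τ k)) ∧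
      ρ = ∑ k, (r k : ℂ) • (σ k ⊗ₖ τ k) := by
  classical
  have hρ_mem : ρ ∈ Submodule.span ℂ (Set.image2 (· ⊗ₖ ·) {σ : Matrix dA dA ℂ | IsDensityMatrix σ}
      {τ : Matrix dB dB ℂ | IsDensityMatrix τ}) := by
    rw [span_kronecker_isDensityMatrix_eq_top]; trivial
  obtain ⟨n, c, P, hP⟩ := Submodule.mem_span_set'.mp hρ_mem
  choose σ hσ τ hτ hστ using fun k => (P k).2
  have hρ_eq : ρ = ∑ k, c k • (σ k ⊗ₖ τ k) := by simp only [hστ, ← hP]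
  have hherm : ∀ k, (σ k ⊗ₖ τ k).IsHermitian := fun k => by
    rw [IsHermitian, conjTranspose_kronecker, (hσ k).1.1, (hτ k).1.1]
  refine ⟨n, fun k => (c k).re, σ, τ, hσ, hτ, ?_⟩
  rw [hρ_eq, sum_smul_eq_sum_re_smul_of_isHermitian _ _ _ hherm (hρ_eq ▸ hρ)]

theorem trace_sum_smul_kronecker {n : ℕ} (r : Fin n → ℝ) {σ : Fin n → Matrix dA dA ℂ}
    {τ : Fin n → Matrix dB dB ℂ} (hσ : ∀ k, IsDensityMatrix (σ k))
    (hτ : ∀ k, IsDensityMatrix (τ k)) :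
    (∑ k, (r k : ℂ) • (σ k ⊗ₖ τ k)).trace = ((∑ k, r k : ℝ) : ℂ) := by
  simp [trace_sum, trace_kronecker, (hσ _).2, (hτ _).2]

theorem SeparableState.trace_eq_one {ρ : Matrix (dA × dB) (dA × dB) ℂ} (hρ : SeparableState ρ) :
    ρ.trace = 1 := by
  obtain ⟨n, p, σ, τ, -, hp, hσ, hτ, rfl⟩ := hρ
  rw [trace_sum_smul_kronecker p hσ hτ, hp, Complex.ofReal_one]

end Bipartite

section Robustness

variable {dA dB : Type*} [Fintype dA] [Fintype dB]

def robustnessSet (ρ : Matrix (dA × dB) (dA × dB) ℂ) : Set ℝ :=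
  { t : ℝ | 0 ≤ t ∧ ∃ σ : Matrix (dA × dB) (dA × dB) ℂ,
    SeparableState σ ∧ SeparableState (((1 + t : ℝ) : ℂ)⁻¹ • (ρ + (t : ℂ) • σ)) }

def gammaSepSet (ρ : Matrix (dA × dB) (dA × dB) ℂ) : Set ℝ :=
  { c : ℝ | ∃ (ap am : ℝ) (ρp ρm : Matrix (dA × dB) (dA × dB) ℂ),
    0 ≤ ap ∧ 0 ≤ am ∧ SeparableState ρp ∧ SeparableState ρm ∧
    ρ = (ap : ℂ) • ρp - (am : ℂ) • ρm ∧ c = ap + am }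

/-- Writing `ρ = ∑ rₖ Pₖ` with product states `Pₖ` and `s = ∑ |rₖ| ≥ ∑ rₖ = 1`, the state
`σ = ∑ (|rₖ| / s) Pₖ` mixes `ρ` into `(ρ + s σ) / (1 + s) = ∑ ((rₖ + |rₖ|) / (1 + s)) Pₖ`. -/
theorem robustnessSet_nonempty {ρ : Matrix (dA × dB) (dA × dB) ℂ} (hherm : ρ.IsHermitian)
    (htr : ρ.trace = 1) : (robustnessSet ρ).Nonempty := by
  obtain ⟨n, r, σ, τ, hσ, hτ, hρ_eq⟩ := hherm.exists_eq_sum_real_smul_kronecker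
  have hr_sum : ∑ k, r k = 1 := by
    rwa [hρ_eq, trace_sum_smul_kronecker r hσ hτ, Complex.ofReal_eq_one] at htr
  set s := ∑ k, |r k|
  have hs_pos : 0 < s := by
    have : ∑ k, r k ≤ s := Finset.sum_le_sum fun k _ => le_abs_self _
    linarith
  refine ⟨s, hs_pos.le, ∑ k, ((|r k| / s : ℝ) : ℂ) • (σ k ⊗ₖ τ k),
    ⟨n, fun k => |r k| / s, σ, τ, fun k => by positivity, ?_, hσ, hτ, rfl⟩,
    ⟨n, fun k => (r k + |r k|) / (1 + s), σ, τ, fun k => ?_, ?_, hσ, hτ, ?_⟩⟩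
  · rw [← Finset.sum_div, div_self hs_pos.ne']
  · exact div_nonneg (by linarith [neg_abs_le (r k)]) (by positivity)
  · rw [← Finset.sum_div, Finset.sum_add_distrib, hr_sum, div_self (by positivity)]
  · rw [hρ_eq, Finset.smul_sum, ← Finset.sum_add_distrib, Finset.smul_sum]
    refine Finset.sum_congr rfl fun k _ => ?_
    simp only [smul_smul, ← add_smul]
    congr 1
    push_cast
    field_simp

theorem gammaSepSet_eq_image {ρ : Matrix (dA × dB) (dA × dB) ℂ} (hρ : ρ.trace = 1) :
    gammaSepSet ρ = (fun t => 1 + 2 * t) '' robustnessSet ρ := by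
  ext c
  constructor
  · rintro ⟨ap, am, ρp, ρm, -, ham, hρp, hρm, hρ_eq, rfl⟩
    have hap : ap = 1 + am := by
      have h := congrArg trace hρ_eq
      rw [hρ, trace_sub, trace_smul, trace_smul, hρp.trace_eq_one, hρm.trace_eq_one] at h
      have h' : ((ap - am : ℝ) : ℂ) = 1 := by push_cast; simpa using h.symm
      linarith [Complex.ofReal_eq_one.mp h']
    refine ⟨am, ⟨ham, ρm, hρm, ?_⟩, by rw [hap]; ring⟩
    rwa [hρ_eq, sub_add_cancel, ← hap, smul_smul, inv_mul_cancel₀ (by norm_cast; linarith),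
      one_smul]
  · rintro ⟨t, ⟨ht, σ, hσ, hmix⟩, rfl⟩
    refine ⟨1 + t, t, _, σ, by linarith, ht, hmix, hσ, ?_, by ring⟩
    rw [smul_smul, mul_inv_cancel₀ (by norm_cast; linarith), one_smul, add_sub_cancel_right]

end Robustness

theorem gammaSep_eq_one_add_two_robustness {dA dB : ℕ}
    (ρ : Matrix (Fin dA × Fin dB) (Fin dA × Fin dB) ℂ) (hρ : IsDensityMatrix ρ) :
    gammaSep ρ = 1 + 2 * robustness ρ := by
  change sInf (gammaSepSet ρ) = 1 + 2 * sInf (robustnessSet ρ)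
  rw [gammaSepSet_eq_image hρ.2]
  exact ((Monotone.const_add (monotone_id.const_mul zero_le_two) 1).map_csInf_of_continuousAt
    (by fun_prop) (robustnessSet_nonempty hρ.1.1 hρ.2) ⟨0, fun t ht => ht.1⟩).symm
end
end

section
/- The robustness of entanglement is invariant under local unitaries: for any density matrix ρ on ℂ^{dA} ⊗ ℂ^{dB} and any unitary matrices U_A (dA×dA) and U_B (dB×dB), E((U_A ⊗ U_B) ρ (U_A ⊗ U_B)ᴴ) = E(ρ). -/
open Matrix Complex Kronecker
open scoped ComplexOrder

noncomputable section

/-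
Conjugation by a local unitary `W = U_A ⊗ U_B` maps product states to product states, and so
does conjugation by `Wᴴ = U_Aᴴ ⊗ U_Bᴴ`. Hence `σ ↦ W σ Wᴴ` is a linear bijection preserving
separability in both directions, and it carries the admissible pairs `(t, σ)` in the definition
of the robustness of `ρ` onto those of `W ρ Wᴴ`.
-/

theorem IsDensityMatrix.unitary_conj {d : Type*} [Fintype d] [DecidableEq d]
    {U ρ : Matrix d d ℂ} (hU : U ∈ unitaryGroup d ℂ) (hρ : IsDensityMatrix ρ) :
    IsDensityMatrix (U * ρ * Uᴴ) := by
  refine ⟨hρ.1.mul_mul_conjTranspose_same U, ?_⟩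
  rw [trace_mul_cycle, ← star_eq_conjTranspose, Unitary.star_mul_self_of_mem hU, one_mul, hρ.2]

section LocalUnitary

variable {dA dB : Type*} [Fintype dA] [Fintype dB] [DecidableEq dA] [DecidableEq dB]
  {UA : Matrix dA dA ℂ} {UB : Matrix dB dB ℂ}

theorem SeparableState.kronecker_conj (hUA : UA ∈ unitaryGroup dA ℂ)
    (hUB : UB ∈ unitaryGroup dB ℂ) {σ : Matrix (dA × dB) (dA × dB) ℂ}
    (hσ : SeparableState σ) : SeparableState ((UA ⊗ₖ UB) * σ * (UA ⊗ₖ UB)ᴴ) := by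
  obtain ⟨n, p, s, t, hp, hp1, hs, ht, rfl⟩ := hσ
  refine ⟨n, p, fun k => UA * s k * UAᴴ, fun k => UB * t k * UBᴴ, hp, hp1,
    fun k => (hs k).unitary_conj hUA, fun k => (ht k).unitary_conj hUB, ?_⟩
  simp only [Finset.mul_sum, Finset.sum_mul, Matrix.mul_smul, Matrix.smul_mul,
    conjTranspose_kronecker, mul_kronecker_mul]

theorem separableState_kronecker_conj_iff (hUA : UA ∈ unitaryGroup dA ℂ)
    (hUB : UB ∈ unitaryGroup dB ℂ) {σ : Matrix (dA × dB) (dA × dB) ℂ} :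
    SeparableState ((UA ⊗ₖ UB) * σ * (UA ⊗ₖ UB)ᴴ) ↔ SeparableState σ := by
  refine ⟨fun h => ?_, SeparableState.kronecker_conj hUA hUB⟩
  let W : unitaryGroup (dA × dB) ℂ := ⟨UA ⊗ₖ UB, kronecker_mem_unitary hUA hUB⟩
  have hback := h.kronecker_conj (Unitary.star_mem hUA) (Unitary.star_mem hUB)
  have hcancel := (Unitary.conjStarAlgAut ℂ _ W).symm_apply_apply σ
  simp only [star_eq_conjTranspose, ← conjTranspose_kronecker, conjTranspose_conjTranspose]
    at hback
  rw [Unitary.conjStarAlgAut_symm_apply, Unitary.conjStarAlgAut_apply] at hcancel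
  convert hback using 1
  exact hcancel.symm

end LocalUnitary

theorem robustness_unitary_conj {dA dB : Type*} [Fintype dA] [Fintype dB]
    [DecidableEq dA] [DecidableEq dB] {W : Matrix (dA × dB) (dA × dB) ℂ}
    (hW : W ∈ unitaryGroup (dA × dB) ℂ)
    (hsep : ∀ σ, SeparableState (W * σ * Wᴴ) ↔ SeparableState σ)
    (ρ : Matrix (dA × dB) (dA × dB) ℂ) :
    robustness (W * ρ * Wᴴ) = robustness ρ := by
  have hlin (c t : ℂ) (σ : Matrix (dA × dB) (dA × dB) ℂ) :
      c • (W * ρ * Wᴴ + t • (W * σ * Wᴴ)) = W * (c • (ρ + t • σ)) * Wᴴ := by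
    rw [Matrix.mul_smul, Matrix.smul_mul, Matrix.mul_add, Matrix.add_mul, Matrix.mul_smul,
      Matrix.smul_mul]
  unfold robustness
  congr 1
  ext t
  refine and_congr_right fun _ =>
    ((Unitary.conjStarAlgAut ℂ _ ⟨W, hW⟩).toEquiv.exists_congr_right).symm.trans
      (exists_congr fun σ => ?_)
  exact and_congr (hsep σ) ((iff_of_eq (congrArg _ (hlin _ _ σ))).trans (hsep _))

theorem robustness_local_unitary_invariance_general {dA dB : ℕ}
    (ρ : Matrix (Fin dA × Fin dB) (Fin dA × Fin dB) ℂ)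
    (UA : Matrix (Fin dA) (Fin dA) ℂ) (hUA : UA ∈ Matrix.unitaryGroup (Fin dA) ℂ)
    (UB : Matrix (Fin dB) (Fin dB) ℂ) (hUB : UB ∈ Matrix.unitaryGroup (Fin dB) ℂ) :
    robustness ((UA ⊗ₖ UB) * ρ * (UA ⊗ₖ UB)ᴴ) = robustness ρ :=
  robustness_unitary_conj (kronecker_mem_unitary hUA hUB)
    (fun _ => separableState_kronecker_conj_iff hUA hUB) ρ

theorem robustness_local_unitary_invariance {dA dB : ℕ}
    (ρ : Matrix (Fin dA × Fin dB) (Fin dA × Fin dB) ℂ) (hρ : IsDensityMatrix ρ)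
    (UA : Matrix (Fin dA) (Fin dA) ℂ) (hUA : UA ∈ Matrix.unitaryGroup (Fin dA) ℂ)
    (UB : Matrix (Fin dB) (Fin dB) ℂ) (hUB : UB ∈ Matrix.unitaryGroup (Fin dB) ℂ) :
    robustness ((UA ⊗ₖ UB) * ρ * (UA ⊗ₖ UB)ᴴ) = robustness ρ :=
  robustness_local_unitary_invariance_general ρ UA hUA UB hUB
end
end

section
/- Let n ≥ 2 and let ψ_n ∈ ℂ^{2^n} ⊗ ℂ^{2^n} be the unit vector with components (ψ_n)_{(a,b)} = 2^{−n/2} if a = b and 0 otherwise, where a, b range over {0,1}^n (this is the n-fold tensor power of a Bell pair with the A-systems and B-systems grouped together). Then 1 + 2·E(|ψ_n⟩⟨ψ_n|) = 2^{n+1} − 1, and this is strictly smaller than 3^n = (1 + 2·E(|ψ_1⟩⟨ψ_1|))^n, where ψ_1 = (e_0⊗e_0 + e_1⊗e_1)/√2 is a single Bell pair. -/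
open Matrix Complex Kronecker
open scoped ComplexOrder

noncomputable section

/-!
The maximally entangled state `ψ` on `ι × ι` with `d = |ι| ≥ 2` has robustness `d - 1`; `n` Bell
pairs are the case `d = 2 ^ n`.

Lower bound: `⟨ψ| σ ⊗ τ |ψ⟩ = tr (σ τᵀ) / d ∈ [0, 1/d]` for density matrices `σ`, `τ`
(Cauchy–Schwarz after writing them as sums of rank-one matrices), so separable states have
fidelity at most `1/d` with `ψ`, while `(ψψ* + tσ) / (1 + t)` has fidelity at least `1 / (1 + t)`.

Upper bound: mixing `ψψ*` in the ratio `1 : d - 1` with the uniform mixture of the product basis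
states `e_a ⊗ e_b`, `a ≠ b`, gives an isotropic state that is the uniform average over
`ω : ι → ZMod 3` of the product states `u_ω ⊗ ū_ω`, `u_ω j = ζ ^ (ω j) / √d` with `ζ` a primitive
cube root of unity: averaging `ζ ^ (ω j - ω j' - ω k + ω k')` over `ω` keeps exactly the entries
with `(j, k) = (j', k')` or `j = k ∧ j' = k'`.
-/

open Finset

section Separable

variable {dA dB : Type*} [Fintype dA] [Fintype dB]

theorem isDensityMatrix_vecMulVec {ι : Type*} [Fintype ι] (v : ι → ℂ) (hv : v ⬝ᵥ star v = 1) :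
    IsDensityMatrix (vecMulVec v (star v)) :=
  ⟨posSemidef_vecMulVec_self_star v, by rw [trace_vecMulVec, hv]⟩

theorem isDensityMatrix_single {ι : Type*} [Fintype ι] [DecidableEq ι] (a : ι) :
    IsDensityMatrix (single a a (1 : ℂ)) := by
  refine ⟨?_, trace_single_eq_same a 1⟩
  rw [← diagonal_single, posSemidef_diagonal_iff]
  intro i
  rw [Pi.single_apply]
  split_ifs <;> norm_num

theorem SeparableState.sum_smul_kronecker {κ : Type*} [Fintype κ] (w : κ → ℝ)
    (σ : κ → Matrix dA dA ℂ) (τ : κ → Matrix dB dB ℂ) (hw : ∀ k, 0 ≤ w k) (hw1 : ∑ k, w k = 1)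
    (hσ : ∀ k, IsDensityMatrix (σ k)) (hτ : ∀ k, IsDensityMatrix (τ k)) :
    SeparableState (∑ k, (w k : ℂ) • (σ k ⊗ₖ τ k)) := by
  let e := (Fintype.equivFin κ).symm
  refine ⟨Fintype.card κ, w ∘ e, σ ∘ e, τ ∘ e, fun i => hw _, ?_, fun i => hσ _,
    fun i => hτ _, ?_⟩
  · rw [← hw1]; exact e.sum_comp w
  · exact (e.sum_comp _).symm

theorem SeparableState.diagonal [DecidableEq dA] [DecidableEq dB] (w : dA × dB → ℝ)
    (hw : ∀ p, 0 ≤ w p) (hw1 : ∑ p, w p = 1) :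
    SeparableState (Matrix.diagonal fun p => (w p : ℂ)) := by
  have h : Matrix.diagonal (fun p => (w p : ℂ)) =
      ∑ p : dA × dB, (w p : ℂ) • (single p.1 p.1 (1 : ℂ) ⊗ₖ single p.2 p.2 1) := by
    simp_rw [single_kronecker_single, mul_one, smul_single, smul_eq_mul, mul_one]
    exact (sum_single_eq_diagonal _).symm
  rw [h]
  exact .sum_smul_kronecker w _ _ hw hw1 (fun p => isDensityMatrix_single _)
    (fun p => isDensityMatrix_single _)

end Separable

section Overlap

variable {ι : Type*} [Fintype ι]

theorem star_dotProduct_mul_dotProduct_le (u w : ι → ℂ) :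
    star (u ⬝ᵥ w) * (u ⬝ᵥ w) ≤ (u ⬝ᵥ star u) * (w ⬝ᵥ star w) := by
  set x := WithLp.toLp 2 (star u)
  set y := WithLp.toLp 2 w
  have hs : u ⬝ᵥ w = inner ℂ x y := by
    rw [EuclideanSpace.inner_toLp_toLp, star_star, dotProduct_comm]
  have hx : u ⬝ᵥ star u = (‖x‖ : ℂ) ^ 2 := by
    have := inner_self_eq_norm_sq_to_K (𝕜 := ℂ) x
    rwa [EuclideanSpace.inner_toLp_toLp, star_star, dotProduct_comm] at this
  have hy : w ⬝ᵥ star w = (‖y‖ : ℂ) ^ 2 := inner_self_eq_norm_sq_to_K (𝕜 := ℂ) y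
  rw [hs, hx, hy, RCLike.star_def, Complex.conj_mul', ← mul_pow]
  exact_mod_cast pow_le_pow_left₀ (norm_nonneg _) (norm_inner_le_norm x y) 2

theorem trace_vecMulVec_mul_transpose_vecMulVec (u w : ι → ℂ) :
    (vecMulVec u (star u) * (vecMulVec w (star w))ᵀ).trace = star (u ⬝ᵥ w) * (u ⬝ᵥ w) := by
  rw [transpose_vecMulVec, vecMulVec_mul_vecMulVec, trace_vecMulVec, dotProduct_smul,
    star_dotProduct_star, dotProduct_comm w, smul_eq_mul]

theorem Matrix.PosSemidef.trace_mul_transpose_mem_Icc {σ τ : Matrix ι ι ℂ}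
    (hσ : σ.PosSemidef) (hτ : τ.PosSemidef) :
    0 ≤ (σ * τᵀ).trace ∧ (σ * τᵀ).trace ≤ σ.trace * τ.trace := by
  obtain ⟨m, u, rfl⟩ := posSemidef_iff_eq_sum_vecMulVec.mp hσ
  obtain ⟨m', w, rfl⟩ := posSemidef_iff_eq_sum_vecMulVec.mp hτ
  simp only [transpose_sum, sum_mul_sum, trace_sum, trace_vecMulVec_mul_transpose_vecMulVec,
    trace_vecMulVec]
  exact ⟨sum_nonneg fun i _ => sum_nonneg fun l _ => star_mul_self_nonneg _,
    sum_le_sum fun i _ => sum_le_sum fun l _ => star_dotProduct_mul_dotProduct_le _ _⟩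

end Overlap

section Characters

theorem AddChar.map_sum_eq_prod {A M ι : Type*} [AddCommMonoid A] [CommMonoid M]
    (ψ : AddChar A M) (s : Finset ι) (f : ι → A) : ψ (∑ i ∈ s, f i) = ∏ i ∈ s, ψ (f i) := by
  induction s using Finset.cons_induction with
  | empty => simp
  | cons a s ha ih => rw [sum_cons, prod_cons, map_add_eq_mul, ih]

theorem AddChar.sum_apply_dotProduct {R R' ι : Type*} [CommRing R] [Fintype R] [DecidableEq R]
    [CommRing R'] [IsDomain R'] [Fintype ι] [DecidableEq ι] {ψ : AddChar R R'}
    (hψ : ψ.IsPrimitive) (c : ι → R) :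
    ∑ ω : ι → R, ψ (c ⬝ᵥ ω) = if c = 0 then (Fintype.card R : R') ^ Fintype.card ι else 0 := by
  simp_rw [dotProduct, ψ.map_sum_eq_prod]
  rw [← Fintype.piFinset_univ, sum_prod_piFinset univ fun i x => ψ (c i * x)]
  simp_rw [mul_comm (c _), AddChar.sum_mulShift _ hψ, apply_ite (Nat.cast : ℕ → R'),
    Nat.cast_zero]
  rw [Fintype.prod_ite_zero, prod_const, card_univ]
  simp only [funext_iff, Pi.zero_apply]

theorem ZMod.star_stdAddChar {N : ℕ} [NeZero N] (x : ZMod N) :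
    star (ZMod.stdAddChar x) = ZMod.stdAddChar (-x) := by
  have hN : 0 < ringChar (ZMod N) := by rw [ZMod.ringChar_zmod_n]; exact Nat.pos_of_neZero N
  rw [RCLike.star_def, AddChar.starComp_apply hN, AddChar.inv_apply]

theorem single_sub_single_sub_single_add_single_eq_zero_iff {R ι : Type*} [Ring R]
    [DecidableEq ι] (h2 : (2 : R) ≠ 0) (j k j' k' : ι) :
    (Pi.single j 1 - Pi.single j' 1 - Pi.single k 1 + Pi.single k' 1 : ι → R) = 0 ↔
      (j, k) = (j', k') ∨ (j = k ∧ j' = k') := by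
  constructor
  · intro h
    have hj := congrFun h j
    have hk := congrFun h k
    have hj' := congrFun h j'
    have hk' := congrFun h k'
    simp only [Pi.add_apply, Pi.sub_apply, Pi.single_apply, Pi.zero_apply] at hj hk hj' hk'
    by_cases a : j = k <;> by_cases b : j = j' <;> by_cases c : j = k' <;> by_cases d : k = j' <;>
      by_cases e : k = k' <;> by_cases f : j' = k' <;> simp_all [← one_add_one_eq_two]
  · rintro (h | ⟨rfl, rfl⟩)
    · obtain ⟨rfl, rfl⟩ := Prod.mk.inj h
      abel
    · abel

end Characters

section MaxEntangled

variable {ι : Type*} [Fintype ι]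

theorem inv_sqrt_card_mul_self :
    (((Real.sqrt (Fintype.card ι))⁻¹ : ℝ) : ℂ) * (((Real.sqrt (Fintype.card ι))⁻¹ : ℝ) : ℂ) =
      (Fintype.card ι : ℂ)⁻¹ := by
  rw [← Complex.ofReal_mul, ← mul_inv, Real.mul_self_sqrt (Nat.cast_nonneg _)]
  push_cast; rfl

variable (ι) in
def phaseVector (ω : ι → ZMod 3) : ι → ℂ :=
  fun j => (((Real.sqrt (Fintype.card ι))⁻¹ : ℝ) : ℂ) * ZMod.stdAddChar (ω j)

theorem star_phaseVector (ω : ι → ZMod 3) : star (phaseVector ι ω) = phaseVector ι (-ω) := by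
  ext j
  simp [phaseVector, ZMod.star_stdAddChar]

theorem phaseVector_dotProduct_star [Nonempty ι] (ω : ι → ZMod 3) :
    phaseVector ι ω ⬝ᵥ star (phaseVector ι ω) = 1 := by
  rw [star_phaseVector]
  simp only [dotProduct, phaseVector, Pi.neg_apply]
  have hterm (x : ZMod 3) : (((Real.sqrt (Fintype.card ι))⁻¹ : ℝ) : ℂ) * ZMod.stdAddChar x *
      ((((Real.sqrt (Fintype.card ι))⁻¹ : ℝ) : ℂ) * ZMod.stdAddChar (-x)) =
      (Fintype.card ι : ℂ)⁻¹ := by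
    rw [mul_mul_mul_comm, inv_sqrt_card_mul_self, ← AddChar.map_add_eq_mul, add_neg_cancel,
      AddChar.map_zero_eq_one, mul_one]
  simp only [hterm, sum_const, card_univ, nsmul_eq_mul]
  field_simp

variable [DecidableEq ι]

variable (ι) in
def maxEntangled : ι × ι → ℂ :=
  fun p => if p.1 = p.2 then (((Real.sqrt (Fintype.card ι))⁻¹ : ℝ) : ℂ) else 0

theorem vecMulVec_maxEntangled_apply (p q : ι × ι) :
    vecMulVec (maxEntangled ι) (star (maxEntangled ι)) p q =
      if p.1 = p.2 ∧ q.1 = q.2 then (Fintype.card ι : ℂ)⁻¹ else 0 := by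
  simp only [vecMulVec_apply, maxEntangled, Pi.star_apply, RCLike.star_def,
    apply_ite (starRingEnd ℂ), Complex.conj_ofReal, map_zero, mul_ite, ite_mul, mul_zero,
    zero_mul, inv_sqrt_card_mul_self]
  split_ifs <;> tauto

theorem star_maxEntangled_dotProduct_mulVec (M : Matrix (ι × ι) (ι × ι) ℂ) :
    star (maxEntangled ι) ⬝ᵥ (M *ᵥ maxEntangled ι) =
      (Fintype.card ι : ℂ)⁻¹ * ∑ a, ∑ b, M (a, a) (b, b) := by
  simp only [dotProduct, mulVec, maxEntangled, Fintype.sum_prod_type, Pi.star_apply,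
    RCLike.star_def, apply_ite (starRingEnd ℂ), Complex.conj_ofReal, map_zero, ite_mul, mul_ite,
    zero_mul, mul_zero, mul_sum, ← inv_sqrt_card_mul_self]
  refine sum_congr rfl fun a _ => ?_
  rw [sum_comm]
  simp only [sum_ite_eq, mem_univ, if_true]
  exact sum_congr rfl fun b _ => by ring

theorem star_maxEntangled_dotProduct_kronecker_mulVec (σ τ : Matrix ι ι ℂ) :
    star (maxEntangled ι) ⬝ᵥ ((σ ⊗ₖ τ) *ᵥ maxEntangled ι) =
      (Fintype.card ι : ℂ)⁻¹ * (σ * τᵀ).trace := by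
  simp only [star_maxEntangled_dotProduct_mulVec, kroneckerMap_apply, trace, diag_apply,
    mul_apply, transpose_apply]

theorem star_maxEntangled_dotProduct_mulVec_self [Nonempty ι] :
    star (maxEntangled ι) ⬝ᵥ
      (vecMulVec (maxEntangled ι) (star (maxEntangled ι)) *ᵥ maxEntangled ι) = 1 := by
  simp only [star_maxEntangled_dotProduct_mulVec, vecMulVec_maxEntangled_apply, and_self,
    if_true, sum_const, card_univ, nsmul_eq_mul]
  field_simp

theorem SeparableState.star_maxEntangled_dotProduct_mulVec_mem_Icc
    {ρ : Matrix (ι × ι) (ι × ι) ℂ} (hρ : SeparableState ρ) :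
    0 ≤ star (maxEntangled ι) ⬝ᵥ (ρ *ᵥ maxEntangled ι) ∧
      star (maxEntangled ι) ⬝ᵥ (ρ *ᵥ maxEntangled ι) ≤ (Fintype.card ι : ℂ)⁻¹ := by
  obtain ⟨N, p, σ, τ, hp, hp1, hσ, hτ, rfl⟩ := hρ
  have hoverlap k := (hσ k).1.trace_mul_transpose_mem_Icc (hτ k).1
  simp only [(hσ _).2, (hτ _).2, one_mul] at hoverlap
  have hd : (0 : ℂ) ≤ (Fintype.card ι : ℂ)⁻¹ := by positivity
  simp only [sum_mulVec, smul_mulVec, dotProduct_sum, dotProduct_smul,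
    star_maxEntangled_dotProduct_kronecker_mulVec, smul_eq_mul]
  constructor
  · exact sum_nonneg fun k _ => mul_nonneg (Complex.zero_le_real.mpr (hp k))
      (mul_nonneg hd (hoverlap k).1)
  · calc ∑ k, (p k : ℂ) * ((Fintype.card ι : ℂ)⁻¹ * (σ k * (τ k)ᵀ).trace)
        ≤ ∑ k, (p k : ℂ) * (Fintype.card ι : ℂ)⁻¹ := sum_le_sum fun k _ =>
          mul_le_mul_of_nonneg_left (mul_le_of_le_one_right hd (hoverlap k).2)
            (Complex.zero_le_real.mpr (hp k))
      _ = (Fintype.card ι : ℂ)⁻¹ := by rw [← sum_mul, ← Complex.ofReal_sum, hp1]; simp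

theorem card_sub_one_le_of_separableState_mix [Nonempty ι] {t : ℝ} (ht : 0 ≤ t)
    {σ : Matrix (ι × ι) (ι × ι) ℂ} (hσ : SeparableState σ)
    (hmix : SeparableState (((1 + t : ℝ) : ℂ)⁻¹ •
      (vecMulVec (maxEntangled ι) (star (maxEntangled ι)) + (t : ℂ) • σ))) :
    (Fintype.card ι : ℝ) - 1 ≤ t := by
  obtain ⟨r, hr, hσr⟩ := RCLike.nonneg_iff_exists_ofReal.mp
    hσ.star_maxEntangled_dotProduct_mulVec_mem_Icc.1
  have hbound := hmix.star_maxEntangled_dotProduct_mulVec_mem_Icc.2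
  rw [smul_mulVec, add_mulVec, smul_mulVec, dotProduct_smul, dotProduct_add, dotProduct_smul,
    star_maxEntangled_dotProduct_mulVec_self, ← hσr, smul_eq_mul, smul_eq_mul] at hbound
  have hbound' : (1 + t)⁻¹ * (1 + t * r) ≤ (Fintype.card ι : ℝ)⁻¹ := by
    rw [← Complex.real_le_real]
    push_cast at hbound ⊢
    exact hbound
  have hinv : (1 + t)⁻¹ ≤ (Fintype.card ι : ℝ)⁻¹ :=
    (le_mul_of_one_le_right (by positivity) (by nlinarith)).trans hbound'
  have := (inv_le_inv₀ (by positivity) (by positivity)).mp hinv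
  linarith

theorem kronecker_phaseVector_apply (ω : ι → ZMod 3) (j k j' k' : ι) :
    (vecMulVec (phaseVector ι ω) (star (phaseVector ι ω)) ⊗ₖ
        vecMulVec (star (phaseVector ι ω)) (phaseVector ι ω)) (j, k) (j', k') =
      ((Fintype.card ι : ℂ) ^ 2)⁻¹ * ZMod.stdAddChar
        ((Pi.single j 1 - Pi.single j' 1 - Pi.single k 1 + Pi.single k' 1) ⬝ᵥ ω) := by
  rw [star_phaseVector]
  simp only [kroneckerMap_apply, vecMulVec_apply, phaseVector, Pi.neg_apply, add_dotProduct,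
    sub_eq_add_neg, neg_dotProduct, single_one_dotProduct, AddChar.map_add_eq_mul]
  rw [sq, mul_inv, ← inv_sqrt_card_mul_self]
  ring

variable (ι) in
def isotropicState : Matrix (ι × ι) (ι × ι) ℂ :=
  of fun p q => if p = q ∨ (p.1 = p.2 ∧ q.1 = q.2) then ((Fintype.card ι : ℂ) ^ 2)⁻¹ else 0

/-- The phases live in `ZMod 3` rather than `ZMod 2` because `e_j - e_j' - e_k + e_k'` must not
vanish when `j = k' ≠ k = j'`, which needs `2 ≠ 0`. -/
theorem isotropicState_eq_sum_phaseVector :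
    isotropicState ι = ∑ ω : ι → ZMod 3, ((((3 : ℝ) ^ Fintype.card ι)⁻¹ : ℝ) : ℂ) •
      (vecMulVec (phaseVector ι ω) (star (phaseVector ι ω)) ⊗ₖ
        vecMulVec (star (phaseVector ι ω)) (phaseVector ι ω)) := by
  ext ⟨j, k⟩ ⟨j', k'⟩
  simp only [Matrix.sum_apply, Matrix.smul_apply, kronecker_phaseVector_apply, smul_eq_mul,
    ← mul_sum, AddChar.sum_apply_dotProduct (ZMod.isPrimitive_stdAddChar 3),
    single_sub_single_sub_single_add_single_eq_zero_iff (by decide : (2 : ZMod 3) ≠ 0),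
    isotropicState, of_apply, ZMod.card]
  split_ifs
  · push_cast
    field_simp
  · simp

theorem SeparableState.isotropicState [Nonempty ι] : SeparableState (isotropicState ι) := by
  rw [isotropicState_eq_sum_phaseVector]
  refine .sum_smul_kronecker _ _ _ (fun _ => by positivity) (by simp)
    (fun ω => isDensityMatrix_vecMulVec _ (phaseVector_dotProduct_star ω)) (fun ω => ?_)
  simpa only [star_star] using isDensityMatrix_vecMulVec (star (phaseVector ι ω))
    (by rw [star_star, dotProduct_comm, phaseVector_dotProduct_star])

variable (ι) in
def offDiagonalWeight : ι × ι → ℝ :=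
  fun p => if p.1 = p.2 then 0 else ((Fintype.card ι : ℝ) * (Fintype.card ι - 1))⁻¹

theorem offDiagonalWeight_nonneg (hd : 2 ≤ Fintype.card ι) (p : ι × ι) :
    0 ≤ offDiagonalWeight ι p := by
  have hd' : (2 : ℝ) ≤ Fintype.card ι := by exact_mod_cast hd
  have : (0 : ℝ) < Fintype.card ι - 1 := by linarith
  unfold offDiagonalWeight
  split_ifs <;> positivity

theorem sum_offDiagonalWeight (hd : 2 ≤ Fintype.card ι) : ∑ p, offDiagonalWeight ι p = 1 := by
  have hd' : (2 : ℝ) ≤ Fintype.card ι := by exact_mod_cast hd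
  set c := ((Fintype.card ι : ℝ) * (Fintype.card ι - 1))⁻¹ with hc
  have hw (a b : ι) : offDiagonalWeight ι (a, b) = c - if a = b then c else 0 := by
    unfold offDiagonalWeight
    split_ifs <;> ring
  simp only [Fintype.sum_prod_type, hw, sum_sub_distrib, sum_ite_eq, mem_univ, if_true,
    sum_const, card_univ, Fintype.card_prod, nsmul_eq_mul, hc]
  have : (Fintype.card ι : ℝ) - 1 ≠ 0 := by linarith
  push_cast
  field_simp

theorem mix_maxEntangled_offDiagonal_eq_isotropicState (hd : 2 ≤ Fintype.card ι) :
    (((1 + ((Fintype.card ι : ℝ) - 1) : ℝ)) : ℂ)⁻¹ •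
      (vecMulVec (maxEntangled ι) (star (maxEntangled ι)) +
        (((Fintype.card ι : ℝ) - 1 : ℝ) : ℂ) • diagonal fun p => (offDiagonalWeight ι p : ℂ)) =
      isotropicState ι := by
  ext ⟨j, k⟩ ⟨j', k'⟩
  simp only [Matrix.smul_apply, Matrix.add_apply, vecMulVec_maxEntangled_apply, diagonal_apply,
    offDiagonalWeight, isotropicState, of_apply, add_sub_cancel, smul_eq_mul, Prod.mk.injEq,
    Complex.ofReal_sub, Complex.ofReal_natCast, Complex.ofReal_one]
  have hcard : (Fintype.card ι : ℂ) - 1 ≠ 0 := by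
    rw [sub_ne_zero]; exact_mod_cast (by omega : Fintype.card ι ≠ 1)
  by_cases hp : j = j' ∧ k = k'
  · obtain ⟨rfl, rfl⟩ := hp
    by_cases hjk : j = k
    · subst hjk
      simp only [and_self, if_true, or_self, Complex.ofReal_zero, mul_zero, add_zero]
      field_simp
    · simp only [hjk, and_self, if_true, if_false, or_false, zero_add]
      push_cast
      field_simp
  · simp only [hp, if_false, false_or, mul_zero, add_zero]
    split_ifs
    · field_simp
    · simp

theorem robustness_maxEntangled (hd : 2 ≤ Fintype.card ι) :
    robustness (vecMulVec (maxEntangled ι) (star (maxEntangled ι))) = Fintype.card ι - 1 := by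
  have : Nonempty ι := Fintype.card_pos_iff.mp (by omega)
  have hd' : (2 : ℝ) ≤ Fintype.card ι := by exact_mod_cast hd
  refine IsLeast.csInf_eq ⟨⟨by linarith, _,
      .diagonal _ (offDiagonalWeight_nonneg hd) (sum_offDiagonalWeight hd), ?_⟩,
    fun t ⟨ht, σ, hσ, hmix⟩ => card_sub_one_le_of_separableState_mix ht hσ hmix⟩
  rw [mix_maxEntangled_offDiagonal_eq_isotropicState hd]
  exact .isotropicState

end MaxEntangled

theorem two_pow_succ_sub_one_lt_three_pow {n : ℕ} (hn : 2 ≤ n) :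
    (2 : ℝ) ^ (n + 1) - 1 < 3 ^ n := by
  obtain ⟨m, rfl⟩ := Nat.exists_eq_add_of_le' hn
  have h23 := pow_le_pow_left₀ (by norm_num) (by norm_num : (2 : ℝ) ≤ 3) m
  have h3pos := pow_pos (by norm_num : (0 : ℝ) < 3) m
  have h2 : (2 : ℝ) ^ (m + 2 + 1) = 8 * 2 ^ m := by ring
  have h3 : (3 : ℝ) ^ (m + 2) = 9 * 3 ^ m := by ring
  linarith

theorem robustness_bell_tensor_power (n : ℕ) (hn : 2 ≤ n) :
    let ψn : (Fin n → Fin 2) × (Fin n → Fin 2) → ℂ :=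
      fun p => if p.1 = p.2 then (((Real.sqrt (2 ^ n))⁻¹ : ℝ) : ℂ) else 0
    let ψ1 : Fin 2 × Fin 2 → ℂ :=
      fun p => if p.1 = p.2 then (((Real.sqrt 2)⁻¹ : ℝ) : ℂ) else 0
    (1 + 2 * robustness (vecMulVec ψn (star ψn)) = 2 ^ (n + 1) - 1) ∧
    ((2 : ℝ) ^ (n + 1) - 1 < 3 ^ n) ∧
    ((3 : ℝ) ^ n = (1 + 2 * robustness (vecMulVec ψ1 (star ψ1))) ^ n) := by
  intro ψn ψ1
  have hcard : Fintype.card (Fin n → Fin 2) = 2 ^ n := by simp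
  have hψn : ψn = maxEntangled (Fin n → Fin 2) := by
    funext p
    simp [ψn, maxEntangled, hcard]
  have hψ1 : ψ1 = maxEntangled (Fin 2) := rfl
  have hcard2 : 2 ≤ Fintype.card (Fin n → Fin 2) := by
    rw [hcard]; exact Nat.le_self_pow (by omega) 2
  rw [hψn, hψ1, robustness_maxEntangled hcard2, robustness_maxEntangled le_rfl, hcard]
  exact ⟨by push_cast; ring, two_pow_succ_sub_one_lt_three_pow hn, by norm_num⟩
end
end

section
/- For every real θ, the controlled-X-rotation gate satisfies the local-unitary decomposition CR_X(θ) = (H ⊗ R_X(θ/2)) · R_XX(−θ/2) · (H ⊗ I₂), i.e., the 4×4 matrix identity (|0⟩⟨0| ⊗ I₂ + |1⟩⟨1| ⊗ exp(−i(θ/2)X)) = (H ⊗ exp(−i(θ/4)X)) · exp(i(θ/4)(X ⊗ X)) · (H ⊗ I₂). -/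
/-!
Put `x = -iθ/4`. Since `X² = 1` and `(X ⊗ X)² = 1`, the exponential of `c • A` for either is
`cosh c • 1 + sinh c • A`. Conjugating by `H ⊗ 1` turns `X ⊗ X` into `Z ⊗ X`, and
`1 ⊗ a + Z ⊗ b = |0⟩⟨0| ⊗ (a + b) + |1⟩⟨1| ⊗ (a - b)`. Hence the right-hand side is
`|0⟩⟨0| ⊗ exp(xX) exp(-xX) + |1⟩⟨1| ⊗ exp(xX) exp(xX) = |0⟩⟨0| ⊗ 1 + |1⟩⟨1| ⊗ exp(2xX)`.
-/

open Matrix Complex Kronecker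
open scoped ComplexOrder

noncomputable section

/-- Pauli X. -/
def PX : Matrix (Fin 2) (Fin 2) ℂ := !![0, 1; 1, 0]
/-- Pauli Y. -/
def PY : Matrix (Fin 2) (Fin 2) ℂ := !![0, -Complex.I; Complex.I, 0]
/-- Pauli Z. -/
def PZ : Matrix (Fin 2) (Fin 2) ℂ := !![1, 0; 0, -1]


theorem exp_smul_of_mul_self_eq_one {𝔸 : Type*} [Ring 𝔸] [Algebra ℂ 𝔸] [TopologicalSpace 𝔸]
    [IsTopologicalRing 𝔸] [ContinuousSMul ℂ 𝔸] [T2Space 𝔸] {a : 𝔸} (ha : a * a = 1) (c : ℂ) :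
    NormedSpace.exp (c • a) = cosh c • 1 + sinh c • a := by
  have h_even (n : ℕ) : a ^ (2 * n) = 1 := by rw [pow_mul, sq, ha, one_pow]
  rw [NormedSpace.exp_eq_tsum ℂ]
  refine HasSum.tsum_eq (HasSum.even_add_odd ?_ ?_)
  · convert (hasSum_cosh c).smul_const (1 : 𝔸) using 2 with n
    rw [smul_pow, h_even, smul_smul, div_eq_inv_mul]
  · convert (hasSum_sinh c).smul_const a using 2 with n
    rw [smul_pow, pow_succ a, h_even, one_mul, smul_smul, div_eq_inv_mul]

def hadamardGate : Matrix (Fin 2) (Fin 2) ℂ := (((Real.sqrt 2)⁻¹ : ℝ) : ℂ) • !![1, 1; 1, -1]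

theorem inv_sqrt_two_mul_self :
    (((Real.sqrt 2)⁻¹ : ℝ) : ℂ) * (((Real.sqrt 2)⁻¹ : ℝ) : ℂ) = 2⁻¹ := by
  rw [← ofReal_mul, ← mul_inv, Real.mul_self_sqrt zero_le_two]
  norm_num

theorem PX_mul_self : PX * PX = 1 := by
  ext i j; fin_cases i <;> fin_cases j <;> simp [PX]

theorem hadamardGate_mul_self : hadamardGate * hadamardGate = 1 := by
  rw [hadamardGate, smul_mul_smul_comm, inv_sqrt_two_mul_self]
  ext i j; fin_cases i <;> fin_cases j <;> norm_num [Matrix.mul_apply]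

theorem hadamardGate_mul_PX_mul_hadamardGate : hadamardGate * PX * hadamardGate = PZ := by
  rw [hadamardGate, smul_mul_assoc, smul_mul_smul_comm, inv_sqrt_two_mul_self]
  ext i j; fin_cases i <;> fin_cases j <;> norm_num [PX, PZ, Matrix.mul_apply]

theorem exp_smul_PX_kronecker_PX (c : ℂ) :
    NormedSpace.exp (c • (PX ⊗ₖ PX)) = 1 ⊗ₖ (cosh c • 1) + PX ⊗ₖ (sinh c • PX) := by
  have h_sq : PX ⊗ₖ PX * PX ⊗ₖ PX = 1 := by
    rw [← mul_kronecker_mul, PX_mul_self, one_kronecker_one]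
  rw [exp_smul_of_mul_self_eq_one h_sq, kronecker_smul, kronecker_smul, one_kronecker_one]

theorem hadamardGate_conj_kronecker {n : Type*} [Fintype n] [DecidableEq n]
    (R A B : Matrix n n ℂ) :
    (hadamardGate ⊗ₖ R) * (1 ⊗ₖ A + PX ⊗ₖ B) * (hadamardGate ⊗ₖ 1) =
      1 ⊗ₖ (R * A) + PZ ⊗ₖ (R * B) := by
  rw [mul_add, add_mul, ← mul_kronecker_mul, ← mul_kronecker_mul, ← mul_kronecker_mul,
    ← mul_kronecker_mul, mul_one, mul_one, mul_one, hadamardGate_mul_self,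
    hadamardGate_mul_PX_mul_hadamardGate]

theorem one_kronecker_add_PZ_kronecker {m n : Type*} (A B : Matrix m n ℂ) :
    1 ⊗ₖ A + PZ ⊗ₖ B = !![1, 0; 0, 0] ⊗ₖ (A + B) + !![0, 0; 0, 1] ⊗ₖ (A - B) := by
  ext ⟨i, k⟩ ⟨j, l⟩
  fin_cases i <;> fin_cases j <;> simp [PZ]; ring

theorem CRX_eq_local_RXX (θ : ℝ) :
    (!![1, 0; 0, 0] : Matrix (Fin 2) (Fin 2) ℂ) ⊗ₖ (1 : Matrix (Fin 2) (Fin 2) ℂ)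
      + (!![0, 0; 0, 1] : Matrix (Fin 2) (Fin 2) ℂ) ⊗ₖ
          NormedSpace.exp ((-(Complex.I * (θ / 2))) • PX) =
    ((((Real.sqrt 2)⁻¹ : ℝ) : ℂ) • (!![1, 1; 1, -1] : Matrix (Fin 2) (Fin 2) ℂ)) ⊗ₖ
        NormedSpace.exp ((-(Complex.I * (θ / 4))) • PX)
      * NormedSpace.exp ((Complex.I * (θ / 4)) • (PX ⊗ₖ PX))
      * ((((Real.sqrt 2)⁻¹ : ℝ) : ℂ) • (!![1, 1; 1, -1] : Matrix (Fin 2) (Fin 2) ℂ)) ⊗ₖ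
          (1 : Matrix (Fin 2) (Fin 2) ℂ) := by
  set x : ℂ := -(I * (θ / 4))
  have h_comm (a b : ℂ) : Commute (a • PX) (b • PX) :=
    ((Commute.refl PX).smul_left a).smul_right b
  have h_double : NormedSpace.exp ((-(I * (θ / 2))) • PX) =
      NormedSpace.exp (x • PX) * NormedSpace.exp (x • PX) := by
    rw [← Matrix.exp_add_of_commute _ _ (h_comm x x), ← add_smul]
    congr 2; ring
  have h_inv : NormedSpace.exp (x • PX) * NormedSpace.exp ((-x) • PX) = 1 := by
    rw [← Matrix.exp_add_of_commute _ _ (h_comm x (-x)), ← add_smul, add_neg_cancel, zero_smul,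
      NormedSpace.exp_zero]
  have h_flip : cosh (-x) • 1 - sinh (-x) • PX = NormedSpace.exp (x • PX) := by
    rw [cosh_neg, sinh_neg, neg_smul, sub_neg_eq_add, exp_smul_of_mul_self_eq_one PX_mul_self]
  rw [h_double, show I * (θ / 4) = -x by ring, exp_smul_PX_kronecker_PX,
    show ((((Real.sqrt 2)⁻¹ : ℝ) : ℂ) • !![1, 1; 1, -1] : Matrix (Fin 2) (Fin 2) ℂ) =
      hadamardGate from rfl, hadamardGate_conj_kronecker, one_kronecker_add_PZ_kronecker,
    ← mul_add, ← mul_sub, ← exp_smul_of_mul_self_eq_one PX_mul_self, h_flip, h_inv]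
end
end

section
/- For real θ_X, θ_Y, let D be the 4×4 complex matrix D = (1/2)·!![α₁, 0, 0, α₂; 0, α₃, α₄, 0; 0, α₄, α₃, 0; α₂, 0, 0, α₁], where α₁ = cos θ_X cos θ_Y + sin θ_X sin θ_Y, α₂ = cos θ_X cos θ_Y − sin θ_X sin θ_Y, α₃ = i(cos θ_X sin θ_Y + sin θ_X cos θ_Y), α₄ = i(sin θ_X cos θ_Y − cos θ_X sin θ_Y). Then the multiset of singular values of D equals { |cos θ_X cos θ_Y|, |cos θ_X sin θ_Y|, |sin θ_X cos θ_Y|, |sin θ_X sin θ_Y| }. -/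
open Matrix Complex Kronecker
open scoped ComplexOrder

noncomputable section

/-!
`D` is diagonal in the Bell basis: `D = B Σ B` with `B` the real symmetric unitary whose columns
are the Bell states and `Σ = diag(cos θX cos θY, i sin θX cos θY, i cos θX sin θY, sin θX sin θY)`.
Then `B (Dᴴ D) Bᴴ = Σᴴ Σ`, so `Dᴴ D` has the same characteristic polynomial, hence the same
eigenvalues, as `diag |σᵢ|²`, and the singular values are the moduli `|σᵢ|`.
-/

namespace Matrix

variable {n : Type*} [Fintype n] [DecidableEq n]

lemma charpoly_mul_mul_of_mul_eq_one {R : Type*} [CommRing R] {P Q : Matrix n n R}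
    (hQP : Q * P = 1) (A : Matrix n n R) : (P * A * Q).charpoly = A.charpoly := by
  rw [charpoly_mul_comm, ← mul_assoc, hQP, one_mul]

lemma IsHermitian.eigenvalues_map_eq_of_mul_mul_eq_diagonal {𝕜 : Type*} [RCLike 𝕜]
    {A : Matrix n n 𝕜} (hA : A.IsHermitian) {P Q : Matrix n n 𝕜} (hQP : Q * P = 1) {d : n → ℝ}
    (h : P * A * Q = diagonal (RCLike.ofReal ∘ d)) :
    Finset.univ.val.map hA.eigenvalues = Finset.univ.val.map d := by
  apply Multiset.map_injective (RCLike.ofReal_injective (K := 𝕜))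
  rw [Multiset.map_map, Multiset.map_map, ← hA.roots_charpoly_eq_eigenvalues,
    ← charpoly_mul_mul_of_mul_eq_one hQP, h, charpoly_diagonal, Polynomial.roots_prod]
  · simp
  · simp [Finset.prod_ne_zero_iff, Polynomial.X_sub_C_ne_zero]

lemma mul_conjTranspose_mul_self_mul_eq_diagonal {V W : Matrix n n ℂ} (hV : Vᴴ * V = 1)
    (hW : W * Wᴴ = 1) (σ : n → ℂ) :
    W * ((V * diagonal σ * W)ᴴ * (V * diagonal σ * W)) * Wᴴ =
      diagonal (RCLike.ofReal ∘ fun i => ‖σ i‖ ^ 2) := by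
  calc _ = (W * Wᴴ) * ((diagonal σ)ᴴ * (Vᴴ * V) * diagonal σ) * (W * Wᴴ) := by
        simp only [conjTranspose_mul, Matrix.mul_assoc]
    _ = _ := by
      rw [hW, hV, Matrix.mul_one, Matrix.one_mul, Matrix.mul_one, diagonal_conjTranspose,
        diagonal_mul_diagonal]
      congr 1
      ext i
      simp [RCLike.conj_mul]

theorem singularValues_mul_diagonal_mul {V W : Matrix n n ℂ} (hV : V ∈ unitaryGroup n ℂ)
    (hW : W ∈ unitaryGroup n ℂ) (σ : n → ℂ) :
    Finset.univ.val.map (singularValues (V * diagonal σ * W)) =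
      Finset.univ.val.map fun i => ‖σ i‖ := by
  have hsq := (isHermitian_conjTranspose_mul_self (V * diagonal σ * W)
    ).eigenvalues_map_eq_of_mul_mul_eq_diagonal (mem_unitaryGroup_iff'.mp hW)
      (mul_conjTranspose_mul_self_mul_eq_diagonal (mem_unitaryGroup_iff'.mp hV)
        (mem_unitaryGroup_iff.mp hW) σ)
  calc Finset.univ.val.map (singularValues (V * diagonal σ * W))
      = (Finset.univ.val.map fun i => ‖σ i‖ ^ 2).map Real.sqrt := by
        rw [← hsq, Multiset.map_map]
        rfl
    _ = _ := by simp [Multiset.map_map]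

end Matrix

lemma sqrt_two_inv_mul_self : (Real.sqrt 2 : ℂ)⁻¹ * (Real.sqrt 2 : ℂ)⁻¹ = 1 / 2 := by
  rw [← mul_inv, ← ofReal_mul, Real.mul_self_sqrt zero_le_two]
  norm_num

/-- Its columns are the Bell states `Φ⁺, Ψ⁺, Ψ⁻, Φ⁻`. -/
def bellUnitary : Matrix (Fin 4) (Fin 4) ℂ :=
  (Real.sqrt 2 : ℂ)⁻¹ • !![1, 0, 0, 1; 0, 1, 1, 0; 0, 1, -1, 0; 1, 0, 0, -1]

lemma bellUnitary_mul_self : bellUnitary * bellUnitary = 1 := by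
  rw [bellUnitary, smul_mul_smul_comm, sqrt_two_inv_mul_self]
  ext i j
  fin_cases i <;> fin_cases j <;> norm_num [Matrix.mul_apply, Fin.sum_univ_four]

lemma star_bellUnitary : star bellUnitary = bellUnitary := by
  ext i j
  fin_cases i <;> fin_cases j <;> simp [bellUnitary, ← ofReal_inv]

lemma bellUnitary_mem_unitaryGroup : bellUnitary ∈ unitaryGroup (Fin 4) ℂ := by
  rw [mem_unitaryGroup_iff, star_bellUnitary, bellUnitary_mul_self]

lemma bellUnitary_mul_diagonal_mul_bellUnitary (l : Fin 4 → ℂ) :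
    bellUnitary * diagonal l * bellUnitary = (1 / 2 : ℂ) •
      !![l 0 + l 3, 0, 0, l 0 - l 3; 0, l 1 + l 2, l 1 - l 2, 0;
        0, l 1 - l 2, l 1 + l 2, 0; l 0 - l 3, 0, 0, l 0 + l 3] := by
  rw [bellUnitary, smul_mul, smul_mul_smul_comm, sqrt_two_inv_mul_self]
  congr 1
  ext i j
  fin_cases i <;> fin_cases j <;> simp [Matrix.mul_apply, Fin.sum_univ_four, vecMul_diagonal] <;>
    ring

theorem singular_values_of_D (θX θY : ℝ) :
    let α₁ : ℂ := Real.cos θX * Real.cos θY + Real.sin θX * Real.sin θY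
    let α₂ : ℂ := Real.cos θX * Real.cos θY - Real.sin θX * Real.sin θY
    let α₃ : ℂ := Complex.I * (Real.cos θX * Real.sin θY + Real.sin θX * Real.cos θY)
    let α₄ : ℂ := Complex.I * (Real.sin θX * Real.cos θY - Real.cos θX * Real.sin θY)
    let D : Matrix (Fin 4) (Fin 4) ℂ :=
      (1 / 2 : ℂ) • !![α₁, 0, 0, α₂; 0, α₃, α₄, 0; 0, α₄, α₃, 0; α₂, 0, 0, α₁]
    Finset.univ.val.map (singularValues D) =
      ({|Real.cos θX * Real.cos θY|, |Real.cos θX * Real.sin θY|,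
        |Real.sin θX * Real.cos θY|, |Real.sin θX * Real.sin θY|} : Multiset ℝ) := by
  intro α₁ α₂ α₃ α₄ D
  have hD : D = bellUnitary * diagonal ![↑(Real.cos θX * Real.cos θY),
      I * ↑(Real.sin θX * Real.cos θY), I * ↑(Real.cos θX * Real.sin θY),
      ↑(Real.sin θX * Real.sin θY)] * bellUnitary := by
    rw [bellUnitary_mul_diagonal_mul_bellUnitary]
    simp only [D, α₁, α₂, α₃, α₄]
    congr 1
    ext i j
    fin_cases i <;> fin_cases j <;> simp <;> ring
  rw [hD, singularValues_mul_diagonal_mul bellUnitary_mem_unitaryGroup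
    bellUnitary_mem_unitaryGroup]
  have norm_I_mul (r : ℝ) : ‖I * r‖ = |r| := by simp
  simp only [Fin.univ_val_map, List.ofFn_succ, List.ofFn_zero, Fin.succ_zero_eq_one,
    Fin.succ_one_eq_two, Fin.reduceSucc, cons_val, norm_I_mul, norm_real, Real.norm_eq_abs,
    Multiset.insert_eq_cons]
  rw [Multiset.cons_swap |Real.cos θX * Real.sin θY|]
  rfl
end
end

section
/- For every real number s > 1 and every natural number k ≥ 2, the strict inequality 2·s^k − 1 < (2s − 1)^k holds. (Consequently, for any entangling Clifford gate the effective per-gate sampling overhead obtained from joint simulation of k copies is strictly smaller than the single-copy overhead.) -/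
theorem two_mul_pow_sub_one_lt (s : ℝ) (hs : 1 < s) (k : ℕ) (hk : 2 ≤ k) :
    2 * s ^ k - 1 < (2 * s - 1) ^ k := by
  induction k, hk using Nat.le_induction with
  | base => nlinarith [sq_nonneg (s - 1)]
  | succ n hn ih =>
      have hpos : (0:ℝ) < 2 * s - 1 := by linarith
      have hsk : (1:ℝ) ≤ s ^ n := one_le_pow₀ hs.le
      calc 2 * s ^ (n+1) - 1 ≤ (2 * s - 1) * (2 * s ^ n - 1) := by
            have : (0:ℝ) ≤ (s ^ n - 1) * (s - 1) := by nlinarith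
            ring_nf
            nlinarith [pow_pos (lt_trans one_pos hs) n]
        _ < (2 * s - 1) * (2 * s - 1) ^ n := by
            exact mul_lt_mul_of_pos_left ih hpos
        _ = (2 * s - 1) ^ (n+1) := by ring
end
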